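/- Let η be a Fox pairing on ℤ[π], let f : π → G be a group homomorphism with kernel A = ker(f), and let κ : ℤ[π] → ℤ[G] be the induced ring homomorphism. Assume κ(η(a, a')) = 0 for all a, a' ∈ A. Then for every x ∈ A ∩ [π,π], every a ∈ A, and every y ∈ [π,π], one has η(x, a·y) ∈ ker(κ) + I², where ker(κ) + I² denotes the sum of the ℤ-submodules ker(κ) and I² of ℤ[π]. -/

import Mathlib

/-- The augmentation homomorphism of the group ring `ℤ[π]`. -/
noncomputable def aug (π : Type*) [Group π] : MonoidAlgebra ℤ π →ₐ[ℤ] ℤ :=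
  MonoidAlgebra.lift ℤ ℤ π 1

/-- The augmentation ideal `I = ker ε`, as a `ℤ`-submodule of `ℤ[π]`. -/
noncomputable def augIdeal (π : Type*) [Group π] : Submodule ℤ (MonoidAlgebra ℤ π) :=
  LinearMap.ker (aug π).toLinearMap

/-- A Fox pairing on the group ring `ℤ[π]`. -/
structure FoxPairing (π : Type*) [Group π] where
  toFun : MonoidAlgebra ℤ π →ₗ[ℤ] MonoidAlgebra ℤ π →ₗ[ℤ] MonoidAlgebra ℤ π
  fox_left : ∀ x x' y : MonoidAlgebra ℤ π,
    toFun (x * x') y = x * toFun x' y + aug π x' • toFun x y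
  fox_right : ∀ x y y' : MonoidAlgebra ℤ π,
    toFun x (y * y') = toFun x y * y' + aug π y • toFun x y'

/-!
The right Fox rule gives `η(x, a y) = η(x, a) y + η(x, y)`. The first summand is killed by `κ`
because `x, a ∈ A`. For the second, `g ↦ ε(η(g, y))` is additive on `π`, so it vanishes on
`[π, π]` and `η(x, ·)` takes values in `I`; then `g ↦ η(x, g)` is additive modulo `I²`, since
`η(x, g) h - η(x, g) = η(x, g) (h - 1) ∈ I²`, so it vanishes on `[π, π]` modulo `I²`.
-/

section

open MonoidAlgebra

variable {π : Type*} [Group π]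

theorem eq_zero_of_mem_commutator {M : Type*} [AddCommGroup M] (φ : π → M)
    (hφ : ∀ g h, φ (g * h) = φ g + φ h) {x : π} (hx : x ∈ commutator π) : φ x = 0 :=
  Multiplicative.ofAdd.injective <|
    Abelianization.commutator_subset_ker (MonoidHom.mk' (fun g ↦ Multiplicative.ofAdd (φ g))
      fun g h ↦ by rw [hφ, ofAdd_add]) hx

theorem aug_of (g : π) : aug π (of ℤ π g) = 1 := by
  simp [aug]

theorem of_sub_one_mem_augIdeal (g : π) : of ℤ π g - 1 ∈ augIdeal π := by
  rw [augIdeal, LinearMap.mem_ker, AlgHom.toLinearMap_apply, map_sub, aug_of, map_one, sub_self]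

namespace FoxPairing

variable (η : FoxPairing π)

theorem apply_of_mul_left (g h : π) (y : MonoidAlgebra ℤ π) :
    η.toFun (of ℤ π (g * h)) y = of ℤ π g * η.toFun (of ℤ π h) y + η.toFun (of ℤ π g) y := by
  rw [map_mul, η.fox_left, aug_of, one_smul]

theorem apply_of_mul_right (x : MonoidAlgebra ℤ π) (g h : π) :
    η.toFun x (of ℤ π (g * h)) = η.toFun x (of ℤ π g) * of ℤ π h + η.toFun x (of ℤ π h) := by
  rw [map_mul, η.fox_right, aug_of, one_smul]

theorem apply_mem_augIdeal_of_mem_commutator {x : π} (hx : x ∈ commutator π)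
    (y : MonoidAlgebra ℤ π) : η.toFun (of ℤ π x) y ∈ augIdeal π :=
  eq_zero_of_mem_commutator (fun g ↦ aug π (η.toFun (of ℤ π g) y)) (fun g h ↦ by
    rw [apply_of_mul_left, map_add, map_mul, aug_of, one_mul, add_comm]) hx

theorem apply_mem_augIdeal_sq_of_mem_commutator {x y : π} (hx : x ∈ commutator π)
    (hy : y ∈ commutator π) : η.toFun (of ℤ π x) (of ℤ π y) ∈ augIdeal π ^ 2 := by
  refine (Submodule.Quotient.mk_eq_zero _).1 <|
    eq_zero_of_mem_commutator
      (fun g ↦ Submodule.Quotient.mk (p := augIdeal π ^ 2) (η.toFun (of ℤ π x) (of ℤ π g)))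
      (fun g h ↦ ?_) hy
  have hsq : η.toFun (of ℤ π x) (of ℤ π g) * (of ℤ π h - 1) ∈ augIdeal π ^ 2 :=
    pow_two (augIdeal π) ▸ Submodule.mul_mem_mul
      (η.apply_mem_augIdeal_of_mem_commutator hx _) (of_sub_one_mem_augIdeal h)
  have hsplit : η.toFun (of ℤ π x) (of ℤ π (g * h)) = η.toFun (of ℤ π x) (of ℤ π g)
      + η.toFun (of ℤ π x) (of ℤ π g) * (of ℤ π h - 1) + η.toFun (of ℤ π x) (of ℤ π h) := by
    rw [apply_of_mul_right, mul_sub, mul_one]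
    abel
  rw [hsplit, Submodule.Quotient.mk_add, Submodule.Quotient.mk_add,
    (Submodule.Quotient.mk_eq_zero _).2 hsq, add_zero]

end FoxPairing

end

/-- Let `f : π → G` with kernel `A` and induced ring homomorphism `κ : ℤ[π] → ℤ[G]`.
If `κ(η(a, a')) = 0` for all `a, a' ∈ A`, then for `x ∈ A ∩ [π,π]`, `a ∈ A` and
`y ∈ [π,π]`, one has `η(x, a·y) ∈ ker(κ) + I²`. -/
theorem foxPairing_ker_add_sq (π : Type*) [Group π] (G : Type*) [Group G]
    (η : FoxPairing π) (f : π →* G)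
    (hA : ∀ a ∈ f.ker, ∀ a' ∈ f.ker,
      MonoidAlgebra.mapDomainRingHom ℤ f
        (η.toFun (MonoidAlgebra.of ℤ π a) (MonoidAlgebra.of ℤ π a')) = 0)
    (x : π) (hx : x ∈ f.ker ⊓ commutator π)
    (a : π) (ha : a ∈ f.ker) (y : π) (hy : y ∈ commutator π) :
    η.toFun (MonoidAlgebra.of ℤ π x) (MonoidAlgebra.of ℤ π (a * y)) ∈
      LinearMap.ker
          ((MonoidAlgebra.mapDomainRingHom ℤ f).toAddMonoidHom.toIntLinearMap) +
        augIdeal π ^ 2 := by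
  rw [η.apply_of_mul_right, Submodule.add_eq_sup]
  refine Submodule.add_mem_sup ?_ (η.apply_mem_augIdeal_sq_of_mem_commutator hx.2 hy)
  change MonoidAlgebra.mapDomainRingHom ℤ f
    (η.toFun (MonoidAlgebra.of ℤ π x) (MonoidAlgebra.of ℤ π a) * MonoidAlgebra.of ℤ π y) = 0
  rw [map_mul, hA x hx.1 a ha, zero_mul]
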